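/- arXiv:1106.1482 — 3 statements merged into one kernel-verified Lean document; each statement's English description precedes it below -/
import Mathlib

section
/- Let K be a field of characteristic zero and let F : ℕ → K be a sequence with F_n ≠ 0 for all n ≥ 1. Fix integers r, s ≥ 1 and elements g₁, g₂ ∈ K. Then the identity F_{r+s} = g₁·F_r + g₂·F_s holds if and only if the F-binomial recurrence C_F(r+s, r) = g₁·C_F(r+s−1, r−1) + g₂·C_F(r+s−1, r) holds. -/
/-- The `F`-factorial: `ffact F 0 = 1`, `ffact F n = F n * F (n-1) * ... * F 1`. -/
def ffact {K : Type*} [Field K] (F : ℕ → K) : ℕ → K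
  | 0 => 1
  | n + 1 => F (n + 1) * ffact F n

/-- The `F`-binomial coefficient `C_F(n, k) = F_n! / (F_k! * F_{n-k}!)`. -/
def fbinom {K : Type*} [Field K] (F : ℕ → K) (n k : ℕ) : K :=
  ffact F n / (ffact F k * ffact F (n - k))


/-! Cancelling factorials gives `F_n · C_F(n-1, r-1) = F_r · C_F(n, r)` and
`F_n · C_F(n-1, r) = F_s · C_F(n, r)` for `n = r + s`, so `F_n` times the right-hand side of the
recurrence is `(g₁ F_r + g₂ F_s) · C_F(n, r)`; as `F_n` and `C_F(n, r)` are nonzero, the recurrence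
and the identity are equivalent. -/

section FBinom

variable {K : Type*} [Field K] (F : ℕ → K)

theorem ffact_succ (n : ℕ) : ffact F (n + 1) = F (n + 1) * ffact F n := rfl

variable {F}

theorem ffact_ne_zero (hF : ∀ n, 1 ≤ n → F n ≠ 0) : ∀ n, ffact F n ≠ 0
  | 0 => one_ne_zero
  | n + 1 => mul_ne_zero (hF _ n.succ_pos) (ffact_ne_zero hF n)

theorem fbinom_ne_zero (hF : ∀ n, 1 ≤ n → F n ≠ 0) (n k : ℕ) : fbinom F n k ≠ 0 :=
  div_ne_zero (ffact_ne_zero hF n) (mul_ne_zero (ffact_ne_zero hF k) (ffact_ne_zero hF _))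

theorem mul_fbinom_pred_pred (hF : ∀ n, 1 ≤ n → F n ≠ 0) {n k : ℕ} (hk : 1 ≤ k) (hkn : k ≤ n) :
    F n * fbinom F (n - 1) (k - 1) = F k * fbinom F n k := by
  obtain ⟨j, rfl⟩ : ∃ j, k = j + 1 := ⟨k - 1, by omega⟩
  obtain ⟨m, rfl⟩ : ∃ m, n = m + 1 := ⟨n - 1, by omega⟩
  have hmj : m + 1 - (j + 1) = m - j := by omega
  simp only [fbinom, Nat.add_sub_cancel, hmj, ffact_succ]
  have := ffact_ne_zero hF j
  have := ffact_ne_zero hF (m - j)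
  have := hF (j + 1) j.succ_pos
  field_simp

theorem mul_fbinom_pred (hF : ∀ n, 1 ≤ n → F n ≠ 0) {n k : ℕ} (hkn : k < n) :
    F n * fbinom F (n - 1) k = F (n - k) * fbinom F n k := by
  obtain ⟨m, rfl⟩ : ∃ m, n = m + 1 := ⟨n - 1, by omega⟩
  have hmk : m + 1 - k = m - k + 1 := by omega
  simp only [fbinom, Nat.add_sub_cancel, hmk, ffact_succ]
  have := ffact_ne_zero hF k
  have := ffact_ne_zero hF (m - k)
  have := hF (m - k + 1) (m - k).succ_pos
  field_simp

end FBinom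

theorem stmt0_general {K : Type*} [Field K] (F : ℕ → K)
    (hF : ∀ n, 1 ≤ n → F n ≠ 0) (r s : ℕ) (hr : 1 ≤ r) (hs : 1 ≤ s)
    (g₁ g₂ : K) :
    F (r + s) = g₁ * F r + g₂ * F s ↔
      fbinom F (r + s) r =
        g₁ * fbinom F (r + s - 1) (r - 1) + g₂ * fbinom F (r + s - 1) r := by
  set C := fbinom F (r + s) r
  have scaled_recurrence : F (r + s) * (g₁ * fbinom F (r + s - 1) (r - 1) + g₂ * fbinom F (r + s - 1) r) =
      (g₁ * F r + g₂ * F s) * C := by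
    have h₁ := mul_fbinom_pred_pred hF hr (Nat.le_add_right r s)
    have h₂ := mul_fbinom_pred hF (k := r) (n := r + s) (by omega)
    rw [Nat.add_sub_cancel_left] at h₂
    linear_combination g₁ * h₁ + g₂ * h₂
  calc F (r + s) = g₁ * F r + g₂ * F s
      ↔ F (r + s) * C = (g₁ * F r + g₂ * F s) * C := (mul_left_inj' (fbinom_ne_zero hF _ _)).symm
    _ ↔ F (r + s) * C = F (r + s) * _ := by rw [scaled_recurrence]
    _ ↔ _ := mul_right_inj' (hF _ (by omega))

theorem stmt0 {K : Type*} [Field K] [CharZero K] (F : ℕ → K)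
    (hF : ∀ n, 1 ≤ n → F n ≠ 0) (r s : ℕ) (hr : 1 ≤ r) (hs : 1 ≤ s)
    (g₁ g₂ : K) :
    F (r + s) = g₁ * F r + g₂ * F s ↔
      fbinom F (r + s) r =
        g₁ * fbinom F (r + s - 1) (r - 1) + g₂ * fbinom F (r + s - 1) r :=
  stmt0_general F hF r s hr hs g₁ g₂
end

section
/- Let K be a field of characteristic zero, let p, q ∈ K be distinct nonzero elements, set t = −p·q, define U_n = (p^n − q^n)/(p − q) and V_n = p^n + q^n, and assume U_n ≠ 0 and V_n ≠ 0 for all n ≥ 1. Then for all integers r, s ≥ 1, the V-mixed-U binomial coefficients satisfy M(r, s) = U_{s+1}·M(r−1, s) + t·V_{r−1}·M(r, s−1). -/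
/-- The `V`-mixed-`U` binomial coefficient `M(r, s) = V_{r+s}! / (V_r! * U_s!)`. -/
def mixedBinom {K : Type*} [Field K] (V U : ℕ → K) (r s : ℕ) : K :=
  ffact V (r + s) / (ffact V r * ffact U s)

/-!
Both `M(r, s-1)` and `M(r-1, s)` are `M(r-1, s-1) · V_{r+s-1}` divided by `U_s`, resp. `V_r`,
and `M(r, s)` is that times `V_{r+s} / (V_r U_s)`. So after clearing the denominators `V_r` and
`U_s` the recurrence is exactly the addition formula `V_{r+s} = U_{s+1} V_r + t V_{r-1} U_s`,
which becomes a polynomial identity in `p` and `q` after multiplying by `p - q`.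
-/

theorem lucas_V_add {K : Type*} [Field K] {p q : K} (hpq : p ≠ q) {t : K} (ht : t = -(p * q))
    {U V : ℕ → K} (hU : ∀ n, U n = (p ^ n - q ^ n) / (p - q)) (hV : ∀ n, V n = p ^ n + q ^ n)
    (r s : ℕ) : V (r + 1 + s) = U (s + 1) * V (r + 1) + t * V r * U s := by
  have hpq' : p - q ≠ 0 := sub_ne_zero.mpr hpq
  rw [hV, hV, hV, hU, hU, ht]
  field_simp
  ring

section MixedBinom

variable {K : Type*} [Field K] (V U : ℕ → K)

theorem mixedBinom_succ_left (r s : ℕ) :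
    mixedBinom V U (r + 1) s = mixedBinom V U r s * V (r + s + 1) / V (r + 1) := by
  rw [mixedBinom, mixedBinom, show r + 1 + s = r + s + 1 by omega, ffact.eq_2 V, ffact.eq_2 V]
  ring

theorem mixedBinom_succ_right (r s : ℕ) :
    mixedBinom V U r (s + 1) = mixedBinom V U r s * V (r + s + 1) / U (s + 1) := by
  rw [mixedBinom, mixedBinom, ← add_assoc, ffact.eq_2 V, ffact.eq_2 U]
  ring

variable {V U}

theorem mixedBinom_succ_succ {t : K} {r s : ℕ} (hV : V (r + 1) ≠ 0) (hU : U (s + 1) ≠ 0)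
    (hadd : V (r + 1 + (s + 1)) = U (s + 2) * V (r + 1) + t * V r * U (s + 1)) :
    mixedBinom V U (r + 1) (s + 1) =
      U (s + 2) * mixedBinom V U r (s + 1) + t * V r * mixedBinom V U (r + 1) s := by
  rw [mixedBinom_succ_left, mixedBinom_succ_right, mixedBinom_succ_left,
    show r + (s + 1) + 1 = r + 1 + (s + 1) by omega, hadd]
  field_simp

end MixedBinom

theorem stmt3_general {K : Type*} [Field K] (p q : K)
    (hpq : p ≠ q) (t : K) (ht : t = -(p * q))
    (U V : ℕ → K)
    (hU : ∀ n, U n = (p ^ n - q ^ n) / (p - q))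
    (hV : ∀ n, V n = p ^ n + q ^ n)
    (hUne : ∀ n, 1 ≤ n → U n ≠ 0) (hVne : ∀ n, 1 ≤ n → V n ≠ 0) :
    ∀ r s : ℕ, 1 ≤ r → 1 ≤ s →
      mixedBinom V U r s =
        U (s + 1) * mixedBinom V U (r - 1) s +
          t * V (r - 1) * mixedBinom V U r (s - 1) := by
  intro r s hr hs
  obtain ⟨r, rfl⟩ := Nat.exists_eq_add_of_le' hr
  obtain ⟨s, rfl⟩ := Nat.exists_eq_add_of_le' hs
  exact mixedBinom_succ_succ (hVne _ hr) (hUne _ hs) (lucas_V_add hpq ht hU hV r (s + 1))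

theorem stmt3 {K : Type*} [Field K] [CharZero K] (p q : K)
    (hp : p ≠ 0) (hq : q ≠ 0) (hpq : p ≠ q) (t : K) (ht : t = -(p * q))
    (U V : ℕ → K)
    (hU : ∀ n, U n = (p ^ n - q ^ n) / (p - q))
    (hV : ∀ n, V n = p ^ n + q ^ n)
    (hUne : ∀ n, 1 ≤ n → U n ≠ 0) (hVne : ∀ n, 1 ≤ n → V n ≠ 0) :
    ∀ r s : ℕ, 1 ≤ r → 1 ≤ s →
      mixedBinom V U r s =
        U (s + 1) * mixedBinom V U (r - 1) s +
          t * V (r - 1) * mixedBinom V U r (s - 1) :=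
  stmt3_general p q hpq t ht U V hU hV hUne hVne
end

section
/- Let K be a field of characteristic zero, let p, q ∈ K be distinct nonzero elements, define U_n = (p^n − q^n)/(p − q) and V_n = p^n + q^n, set Δ = (p − q)², and assume U_n ≠ 0 and V_n ≠ 0 for all n ≥ 1. Then for all integers r, s ≥ 1, the V-mixed-U binomial coefficients satisfy 2·M(r, s) = V_s·M(r−1, s) + Δ·U_r·M(r, s−1). -/
theorem two_mul_lucas_add {K : Type*} [Field K] {p q : K} (hpq : p ≠ q) (r s : ℕ) :
    2 * (p ^ (r + s) + q ^ (r + s)) =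
      (p ^ r + q ^ r) * (p ^ s + q ^ s) +
        (p - q) ^ 2 * ((p ^ r - q ^ r) / (p - q)) * ((p ^ s - q ^ s) / (p - q)) := by
  have : p - q ≠ 0 := sub_ne_zero.mpr hpq
  field_simp
  ring

/-- Peeling off the top factors, all three coefficients are multiples of
`V_{r+s+1}! / (V_r! U_s!)`, so the recurrence is the addition formula divided by
`V_{r+1} U_{s+1}`. -/
theorem two_mul_mixedBinom_add_one_add_one {K : Type*} [Field K] {V U : ℕ → K} {Δ : K}
    {r s : ℕ} (hV : V (r + 1) ≠ 0) (hU : U (s + 1) ≠ 0)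
    (hadd : 2 * V (r + 1 + (s + 1)) = V (r + 1) * V (s + 1) + Δ * U (r + 1) * U (s + 1)) :
    2 * mixedBinom V U (r + 1) (s + 1) =
      V (s + 1) * mixedBinom V U r (s + 1) + Δ * U (r + 1) * mixedBinom V U (r + 1) s := by
  set X := ffact V (r + s + 1) / (ffact V r * ffact U s)
  have hVr : ffact V (r + 1) = V (r + 1) * ffact V r := rfl
  have hUs : ffact U (s + 1) = U (s + 1) * ffact U s := rfl
  have htop :
      mixedBinom V U (r + 1) (s + 1) = X * V (r + 1 + (s + 1)) / (V (r + 1) * U (s + 1)) := by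
    rw [mixedBinom, show r + 1 + (s + 1) = r + s + 1 + 1 by omega, ffact, hVr, hUs]
    ring
  have hleft : mixedBinom V U r (s + 1) = X / U (s + 1) := by
    rw [mixedBinom, ← add_assoc, hUs]
    ring
  have hright : mixedBinom V U (r + 1) s = X / V (r + 1) := by
    rw [mixedBinom, add_right_comm, hVr]
    ring
  rw [htop, hleft, hright]
  field_simp
  linear_combination X * hadd

theorem stmt12_general {K : Type*} [Field K] (p q : K)
    (hpq : p ≠ q)
    (U V : ℕ → K)
    (hU : ∀ n, U n = (p ^ n - q ^ n) / (p - q))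
    (hV : ∀ n, V n = p ^ n + q ^ n)
    (Δ : K) (hΔ : Δ = (p - q) ^ 2)
    (hUne : ∀ n, 1 ≤ n → U n ≠ 0) (hVne : ∀ n, 1 ≤ n → V n ≠ 0) :
    ∀ r s : ℕ, 1 ≤ r → 1 ≤ s →
      2 * mixedBinom V U r s =
        V s * mixedBinom V U (r - 1) s + Δ * U r * mixedBinom V U r (s - 1) := by
  rintro (_ | r) (_ | s) hr hs
  all_goals try omega
  rw [Nat.add_sub_cancel, Nat.add_sub_cancel]
  refine two_mul_mixedBinom_add_one_add_one (hVne _ r.succ_pos) (hUne _ s.succ_pos) ?_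
  simp only [hU, hV, hΔ]
  exact two_mul_lucas_add hpq _ _

theorem stmt12 {K : Type*} [Field K] [CharZero K] (p q : K)
    (hp : p ≠ 0) (hq : q ≠ 0) (hpq : p ≠ q)
    (U V : ℕ → K)
    (hU : ∀ n, U n = (p ^ n - q ^ n) / (p - q))
    (hV : ∀ n, V n = p ^ n + q ^ n)
    (Δ : K) (hΔ : Δ = (p - q) ^ 2)
    (hUne : ∀ n, 1 ≤ n → U n ≠ 0) (hVne : ∀ n, 1 ≤ n → V n ≠ 0) :
    ∀ r s : ℕ, 1 ≤ r → 1 ≤ s →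
      2 * mixedBinom V U r s =
        V s * mixedBinom V U (r - 1) s + Δ * U r * mixedBinom V U r (s - 1) :=
  stmt12_general p q hpq U V hU hV Δ hΔ hUne hVne
end
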